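/- Fix a rooted forest T on a finite vertex set V and a set N ⊆ V. For every vertex u, the edit cost cost(u, C) over all sets C of children of u is minimized by taking C to be exactly the set of close children of u, i.e., cost(u, C*) ≤ cost(u, C) for all C ⊆ children(u), where C* = {c child of u : cc(c) > 0}. -/

import Mathlib

open scoped Classical

/-- `u` is a strict ancestor of `w`: `u` is obtained from `w` by iterating the
parent assignment `p` at least once (and `u ≠ w`). -/
def StrictAnc {V : Type*} (p : V → V) (u w : V) : Prop :=
  u ≠ w ∧ ∃ k : ℕ, p^[k + 1] w = u

/-- `p` is the parent assignment of a rooted forest: iterating `p` from any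
vertex reaches a root (a fixed point of `p`), so there are no cycles. -/
def IsRootedForest {V : Type*} (p : V → V) : Prop :=
  ∀ v : V, ∃ n : ℕ, p^[n + 1] v = p^[n] v

/-- The subtree of `u`: all vertices having `u` as ancestor-or-equal. -/
def subtree {V : Type*} (p : V → V) (u : V) : Set V :=
  {w | u = w ∨ StrictAnc p u w}

/-- The children of `u` in the forest. -/
def children {V : Type*} (p : V → V) (u : V) : Set V :=
  {c | p c = u ∧ c ≠ u}

/-- Child closeness of `w` w.r.t. the neighbour set `N`:
`|subtree(w) ∩ N| − |subtree(w) \ N|`. -/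
noncomputable def cc {V : Type*} (p : V → V) (N : Set V) (w : V) : ℤ :=
  ((subtree p w ∩ N).ncard : ℤ) - ((subtree p w \ N).ncard : ℤ)

/-- `S(u, C)`: the union of `{u}`, the strict ancestors of `u`, and the
subtrees of the children in `C`. -/
def editSet {V : Type*} (p : V → V) (u : V) (C : Set V) : Set V :=
  insert u ({x | StrictAnc p x u} ∪ ⋃ c ∈ C, subtree p c)

/-- The edit cost `cost(u, C) = |S(u,C) \ N| + |N \ S(u,C)|`. -/
noncomputable def cost {V : Type*} (p : V → V) (N : Set V) (u : V) (C : Set V) : ℕ :=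
  (editSet p u C \ N).ncard + (N \ editSet p u C).ncard

/-!
Subtrees of distinct children of `u` are pairwise disjoint, and disjoint from `u` and its
ancestors (a child's subtree containing `u` would close a cycle through `u`, impossible in a
forest). Hence adding a child `c ∉ C` to `C` lowers the cost by exactly `cc c`, so
`cost u C = cost u ∅ - ∑ c ∈ C, cc c`, which is smallest when `C` collects exactly the
children with positive closeness.
-/

open Function

section Subtree

variable {V : Type*} {p : V → V}

theorem mem_subtree_iff {u w : V} : w ∈ subtree p u ↔ ∃ k, p^[k] w = u := by
  constructor
  · rintro (rfl | ⟨-, k, hk⟩)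
    exacts [⟨0, rfl⟩, ⟨k + 1, hk⟩]
  · rintro ⟨_ | k, hk⟩
    · exact Or.inl hk.symm
    · by_cases huw : u = w
      exacts [Or.inl huw, Or.inr ⟨huw, k, hk⟩]

theorem mem_subtree_trans {a b c : V} (hab : a ∈ subtree p b) (hbc : b ∈ subtree p c) :
    a ∈ subtree p c := by
  obtain ⟨k, rfl⟩ := mem_subtree_iff.1 hab
  obtain ⟨l, rfl⟩ := mem_subtree_iff.1 hbc
  exact mem_subtree_iff.2 ⟨l + k, iterate_add_apply p l k a⟩

theorem mem_subtree_or_mem_subtree {a b w : V} (ha : w ∈ subtree p a) (hb : w ∈ subtree p b) :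
    a ∈ subtree p b ∨ b ∈ subtree p a := by
  obtain ⟨k, rfl⟩ := mem_subtree_iff.1 ha
  obtain ⟨l, rfl⟩ := mem_subtree_iff.1 hb
  rcases le_total k l with hkl | hlk
  · refine Or.inl (mem_subtree_iff.2 ⟨l - k, ?_⟩)
    rw [← iterate_add_apply, Nat.sub_add_cancel hkl]
  · refine Or.inr (mem_subtree_iff.2 ⟨k - l, ?_⟩)
    rw [← iterate_add_apply, Nat.sub_add_cancel hlk]

theorem mem_editSet_iff {u x : V} {C : Set V} :
    x ∈ editSet p u C ↔ u ∈ subtree p x ∨ ∃ c ∈ C, x ∈ subtree p c := by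
  simp only [editSet, Set.mem_insert_iff, Set.mem_union, Set.mem_ofPred_eq, Set.mem_iUnion,
    exists_prop, subtree, or_assoc]

theorem editSet_insert (u c : V) (C : Set V) :
    editSet p u (insert c C) = editSet p u C ∪ subtree p c := by
  ext x
  simp only [mem_editSet_iff, Set.mem_union, Set.mem_insert_iff, exists_eq_or_imp]
  grind

end Subtree

namespace IsRootedForest

variable {V : Type*} {p : V → V}

theorem isFixedPt_of_isPeriodicPt (hp : IsRootedForest p) {m : ℕ} {v : V} (hm : 0 < m)
    (hv : IsPeriodicPt p m v) : IsFixedPt p v := by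
  obtain ⟨n, hn⟩ := hp v
  have hroot : IsFixedPt p (p^[n] v) := by rwa [IsFixedPt, ← iterate_succ_apply' p n v]
  have hv_root : p^[n] v = v :=
    calc p^[n] v = p^[n * m - n] (p^[n] v) := (hroot.iterate _).symm
      _ = p^[n * m] v := by
        rw [← iterate_add_apply, Nat.sub_add_cancel (Nat.le_mul_of_pos_right n hm)]
      _ = v := hv.const_mul n
  rwa [hv_root] at hroot

theorem notMem_subtree_of_mem_children (hp : IsRootedForest p) {u c : V}
    (hc : c ∈ children p u) : u ∉ subtree p c := by
  intro hu
  obtain ⟨k, hk⟩ := mem_subtree_iff.1 hu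
  have hcycle : IsPeriodicPt p (k + 1) u := by
    rw [IsPeriodicPt, IsFixedPt, iterate_succ_apply', hk, hc.1]
  exact hc.2 (hk ▸ (hp.isFixedPt_of_isPeriodicPt k.succ_pos hcycle).iterate k)

theorem eq_of_mem_subtree_of_mem_children (hp : IsRootedForest p) {u c c' : V}
    (hc : c ∈ children p u) (hc' : c' ∈ children p u) (h : c ∈ subtree p c') : c = c' := by
  obtain ⟨_ | k, hk⟩ := mem_subtree_iff.1 h
  · exact hk
  · rw [iterate_succ_apply, hc.1] at hk
    exact absurd (mem_subtree_iff.2 ⟨k, hk⟩) (hp.notMem_subtree_of_mem_children hc')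

theorem disjoint_subtree_of_mem_children (hp : IsRootedForest p) {u c c' : V}
    (hc : c ∈ children p u) (hc' : c' ∈ children p u) (hne : c ≠ c') :
    Disjoint (subtree p c) (subtree p c') :=
  Set.disjoint_left.2 fun _ hx hx' =>
    (mem_subtree_or_mem_subtree hx hx').elim
      (fun h => hne (hp.eq_of_mem_subtree_of_mem_children hc hc' h))
      (fun h => hne (hp.eq_of_mem_subtree_of_mem_children hc' hc h).symm)

theorem disjoint_editSet_subtree (hp : IsRootedForest p) {u c : V} {C : Set V}
    (hC : C ⊆ children p u) (hc : c ∈ children p u) (hcC : c ∉ C) :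
    Disjoint (editSet p u C) (subtree p c) := by
  refine Set.disjoint_left.2 fun x hx hxc => ?_
  rcases mem_editSet_iff.1 hx with hux | ⟨c', hc'C, hxc'⟩
  · exact hp.notMem_subtree_of_mem_children hc (mem_subtree_trans hux hxc)
  · have hne : c' ≠ c := fun h => hcC (h ▸ hc'C)
    exact Set.disjoint_left.1 (hp.disjoint_subtree_of_mem_children (hC hc'C) hc hne) hxc' hxc

end IsRootedForest

/-- Adding a set `T` disjoint from `S` changes `|S \ N| + |N \ S|` by `|T \ N| - |T ∩ N|`;
stated without subtraction. -/
theorem ncard_sdiff_add_sdiff_union_of_disjoint {V : Type*} [Finite V] {S T : Set V} (N : Set V)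
    (hST : Disjoint S T) :
    ((S ∪ T) \ N).ncard + (N \ (S ∪ T)).ncard + (T ∩ N).ncard =
      (S \ N).ncard + (N \ S).ncard + (T \ N).ncard := by
  have hdiff : ((S ∪ T) \ N).ncard = (S \ N).ncard + (T \ N).ncard := by
    rw [Set.union_sdiff_distrib]
    exact Set.ncard_union_eq (hST.mono Set.sdiff_subset Set.sdiff_subset)
  have hsplit : N \ S = N \ (S ∪ T) ∪ T ∩ N := by
    ext x
    have := @Set.disjoint_left.1 hST x
    simp only [Set.mem_sdiff, Set.mem_union, Set.mem_inter_iff]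
    tauto
  have hdisj : Disjoint (N \ (S ∪ T)) (T ∩ N) :=
    Set.disjoint_left.2 fun _ hx hxT => hx.2 (Or.inr hxT.1)
  rw [hdiff, hsplit, Set.ncard_union_eq hdisj]
  ring

theorem cost_insert_add_cc {V : Type*} [Finite V] {p : V → V} (hp : IsRootedForest p)
    (N : Set V) {u c : V} {C : Set V} (hC : C ⊆ children p u) (hc : c ∈ children p u)
    (hcC : c ∉ C) :
    (cost p N u (insert c C) : ℤ) + cc p N c = cost p N u C := by
  have h := ncard_sdiff_add_sdiff_union_of_disjoint N (hp.disjoint_editSet_subtree hC hc hcC)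
  rw [← editSet_insert] at h
  simp only [cost, cc]
  omega

theorem cost_add_sum_cc {V : Type*} [Finite V] {p : V → V} (hp : IsRootedForest p)
    (N : Set V) (u : V) (s : Finset V) (hs : ↑s ⊆ children p u) :
    (cost p N u s : ℤ) + ∑ c ∈ s, cc p N c = cost p N u ∅ := by
  induction s using Finset.induction_on with
  | empty => simp
  | insert c s hcs ih =>
    rw [Finset.coe_insert, Set.insert_subset_iff] at hs
    rw [Finset.sum_insert hcs, Finset.coe_insert, ← add_assoc,
      cost_insert_add_cc hp N hs.2 hs.1 (by exact_mod_cast hcs), ih hs.2]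

theorem Finset.sum_le_sum_filter_pos {ι M : Type*} [AddCommMonoid M] [LinearOrder M]
    [IsOrderedAddMonoid M] {s t : Finset ι} (f : ι → M) (hst : s ⊆ t) :
    ∑ i ∈ s, f i ≤ ∑ i ∈ t with 0 < f i, f i := by
  calc ∑ i ∈ s, f i = ∑ i ∈ s with 0 < f i, f i + ∑ i ∈ s with ¬0 < f i, f i :=
        (Finset.sum_filter_add_sum_filter_not s _ f).symm
    _ ≤ ∑ i ∈ s with 0 < f i, f i :=
        add_le_of_nonpos_right (Finset.sum_nonpos fun i hi => not_lt.1 (Finset.mem_filter.1 hi).2)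
    _ ≤ ∑ i ∈ t with 0 < f i, f i :=
        Finset.sum_le_sum_of_subset_of_nonneg (Finset.filter_subset_filter _ hst)
          fun i hi _ => (Finset.mem_filter.1 hi).2.le

theorem cost_close_children_min_general {V : Type*} [Fintype V]
    (p : V → V) (hp : IsRootedForest p) (N : Set V) (u : V)
    (C : Set V) (hC : C ⊆ children p u) :
    cost p N u {c ∈ children p u | 0 < cc p N c} ≤ cost p N u C := by
  set close := (children p u).toFinset.filter (0 < cc p N ·)
  have hcost_C := cost_add_sum_cc hp N u C.toFinset (by simpa using hC)
  have hcost_close := cost_add_sum_cc hp N u close (by simp [close, Set.sep_subset])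
  have hsum : ∑ c ∈ C.toFinset, cc p N c ≤ ∑ c ∈ close, cc p N c :=
    Finset.sum_le_sum_filter_pos (cc p N) (Set.toFinset_subset_toFinset.2 hC)
  rw [Set.coe_toFinset] at hcost_C
  rw [show {c ∈ children p u | 0 < cc p N c} = ↑close by simp [close]]
  omega

/-- For every vertex `u`, taking `C*` to be exactly the set
of close children of `u` (those with `cc(c) > 0`) minimizes the edit cost
`cost(u, C)` over all sets `C` of children of `u`. -/
theorem cost_close_children_min {V : Type*} [Fintype V] [DecidableEq V]
    (p : V → V) (hp : IsRootedForest p) (N : Set V) (u : V)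
    (C : Set V) (hC : C ⊆ children p u) :
    cost p N u {c ∈ children p u | 0 < cc p N c} ≤ cost p N u C :=
  cost_close_children_min_general p hp N u C hC
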